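/- Let 𝔉 be a union-closed family of subsets of X = {a₁,…,aₙ}, with ℱ = φ_w(𝔉) the associated upward-closed family for w = a₁a₂…aₙ, and let a ∈ X. Then ℱ_a is partitioned by φ_w(𝔉_a) and σ_w(a); in turn φ_w(𝔉_a) is partitioned by π_w(a) and ψ(ℱ_ā), where ψ(z) = z ∪ {a}. Moreover σ_w(a) ∪ π_w(a) = { z ∈ ℱ : z \ {a} ∉ ℱ } and |ℱ_a| = |ℱ_ā| + |π_w(a)| + |σ_w(a)|. -/

import Mathlib

open Finset

variable {α : Type*} [DecidableEq α]

/-- A family is union-closed if it is closed under pairwise unions. -/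
def UnionClosed (F : Finset (Finset α)) : Prop := ∀ f ∈ F, ∀ g ∈ F, f ∪ g ∈ F

/-- One rising step: φ_{S,a}(z) = z ∪ {a} if z ∪ {a} ∉ S, and z otherwise. -/
def riseStep (S : Finset (Finset α)) (a : α) (z : Finset α) : Finset α :=
  if insert a z ∈ S then z else insert a z

/-- Iterated rising function along a word (list of letters): at each step the
current family is replaced by its image and the next letter is risen. -/
def riseWord (S : Finset (Finset α)) : List α → Finset α → Finset α
  | [], z => z
  | a :: u, z => riseWord (S.image (riseStep S a)) u (riseStep S a z)

/-- The section of a family along (a prefix of) a word. -/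
def riseSections (S : Finset (Finset α)) : List α → Finset (Finset α)
  | [] => S
  | a :: u => riseSections (S.image (riseStep S a)) u

/-- The spurious elements σ_w(𝔉,a): the elements η ∈ ℱ = φ_w(𝔉) with
a ∈ η \ φ_w⁻¹(η), i.e. η = φ_w(f) with f ∈ 𝔉, a ∉ f, a ∈ η. -/
def spurious (F : Finset (Finset α)) (w : List α) (a : α) : Finset (Finset α) :=
  ((F.filter fun f => a ∉ f).image (riseWord F w)).filter fun η => a ∈ η

/-- The pure elements π_w(𝔉,a): the elements η ∈ φ_w(𝔉_a) with η \ {a} ∉ ℱ. -/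
def pureF (F : Finset (Finset α)) (w : List α) (a : α) : Finset (Finset α) :=
  ((F.filter fun f => a ∈ f).image (riseWord F w)).filter fun η =>
    η.erase a ∉ F.image (riseWord F w)

/-!
A spurious `η = φ_w(f)` with `a ∉ f` acquires `a` at the step of the letter `a`, which raises
some `z` to `z ∪ {a}` only because `z ∪ {a}` is not in the current family. Union-closedness
survives every rising step, and with it the invariant "no member of the current family lies
inside `η \ {a}`" survives every later letter, so `η \ {a} ∉ ℱ`. Since `φ_w` is injective and
extensive and `ℱ` is closed under adding `a`, the partitions and the count follow.
-/

section Rising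

variable {S : Finset (Finset α)} {b x : α} {z : Finset α} {u : List α}

lemma riseStep_of_insert_mem (h : insert b z ∈ S) : riseStep S b z = z := if_pos h

lemma riseStep_of_insert_notMem (h : insert b z ∉ S) : riseStep S b z = insert b z := if_neg h

lemma subset_riseStep (S : Finset (Finset α)) (b : α) (z : Finset α) : z ⊆ riseStep S b z := by
  unfold riseStep; split_ifs
  exacts [subset_rfl, subset_insert b z]

lemma riseStep_subset_insert (S : Finset (Finset α)) (b : α) (z : Finset α) :
    riseStep S b z ⊆ insert b z := by
  unfold riseStep; split_ifs
  exacts [subset_insert b z, subset_rfl]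

lemma insert_riseStep (S : Finset (Finset α)) (b : α) (z : Finset α) :
    insert b (riseStep S b z) = insert b z := by
  unfold riseStep; split_ifs <;> simp

lemma insert_mem_image_riseStep (hz : z ∈ S) : insert b z ∈ S.image (riseStep S b) := by
  by_cases hbz : insert b z ∈ S
  · exact mem_image.2 ⟨insert b z, hbz, riseStep_of_insert_mem (by rwa [insert_idem])⟩
  · exact mem_image.2 ⟨z, hz, riseStep_of_insert_notMem hbz⟩

lemma riseStep_injOn (S : Finset (Finset α)) (b : α) : Set.InjOn (riseStep S b) S := by
  intro f hf g hg h
  unfold riseStep at h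
  split_ifs at h with hbf hbg hbg
  · exact h
  · exact absurd (h ▸ hf) hbg
  · exact absurd (h.symm ▸ hg) hbf
  · have hbf' : b ∉ f := fun hb => hbf (by rwa [insert_eq_of_mem hb])
    have hbg' : b ∉ g := fun hb => hbg (by rwa [insert_eq_of_mem hb])
    rw [← erase_insert hbf', h, erase_insert hbg']

lemma subset_riseWord (S : Finset (Finset α)) (u : List α) (z : Finset α) :
    z ⊆ riseWord S u z := by
  induction u generalizing S z with
  | nil => exact subset_rfl
  | cons b u ih => exact (subset_riseStep S b z).trans (ih _ _)

lemma notMem_riseWord (hz : x ∉ z) (hu : x ∉ u) : x ∉ riseWord S u z := by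
  induction u generalizing S z with
  | nil => exact hz
  | cons b u ih =>
    rw [List.mem_cons, not_or] at hu
    refine ih (fun h => ?_) hu.2
    rcases mem_insert.1 (riseStep_subset_insert S b z h) with rfl | h
    exacts [hu.1 rfl, hz h]

lemma riseWord_injOn (S : Finset (Finset α)) (u : List α) : Set.InjOn (riseWord S u) S := by
  induction u generalizing S with
  | nil => exact Set.injOn_id _
  | cons b u ih =>
    intro f hf g hg h
    exact riseStep_injOn S b hf hg (ih _ (mem_image_of_mem _ hf) (mem_image_of_mem _ hg) h)

lemma riseSections_eq_image (S : Finset (Finset α)) (u : List α) :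
    riseSections S u = S.image (riseWord S u) := by
  induction u generalizing S with
  | nil => simp [riseSections, riseWord]
  | cons b u ih =>
    rw [riseSections, ih, image_image]
    rfl

lemma riseWord_append (S : Finset (Finset α)) (u v : List α) (z : Finset α) :
    riseWord S (u ++ v) z = riseWord (riseSections S u) v (riseWord S u z) := by
  induction u generalizing S z with
  | nil => rfl
  | cons b u ih => exact ih _ _

lemma riseSections_append (S : Finset (Finset α)) (u v : List α) :
    riseSections S (u ++ v) = riseSections (riseSections S u) v := by
  induction u generalizing S with
  | nil => rfl
  | cons b u ih => exact ih _

end Rising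

section InsertClosed

variable {S : Finset (Finset α)} {x : α} {u : List α}

def InsertClosed (x : α) (S : Finset (Finset α)) : Prop := ∀ z ∈ S, insert x z ∈ S

lemma insertClosed_image_riseStep_self (S : Finset (Finset α)) (b : α) :
    InsertClosed b (S.image (riseStep S b)) := by
  rw [InsertClosed, forall_mem_image]
  intro f hf
  rw [insert_riseStep]
  exact insert_mem_image_riseStep hf

lemma InsertClosed.image_riseStep (hS : InsertClosed x S) (b : α) :
    InsertClosed x (S.image (riseStep S b)) := by
  rw [InsertClosed, forall_mem_image]
  intro f hf
  by_cases hbf : insert b f ∈ S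
  · rw [riseStep_of_insert_mem hbf]
    refine mem_image.2 ⟨insert x f, hS f hf, riseStep_of_insert_mem ?_⟩
    rw [insert_comm]
    exact hS _ hbf
  · rw [riseStep_of_insert_notMem hbf, insert_comm]
    exact insert_mem_image_riseStep (hS f hf)

lemma InsertClosed.riseSections (hS : InsertClosed x S) (u : List α) :
    InsertClosed x (riseSections S u) := by
  induction u generalizing S with
  | nil => exact hS
  | cons b u ih => exact ih (hS.image_riseStep b)

lemma insertClosed_image_riseWord (S : Finset (Finset α)) (hx : x ∈ u) :
    InsertClosed x (S.image (riseWord S u)) := by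
  rw [← riseSections_eq_image]
  induction u generalizing S with
  | nil => simp at hx
  | cons b u ih =>
    rcases List.mem_cons.1 hx with rfl | hx
    · exact (insertClosed_image_riseStep_self S x).riseSections u
    · exact ih _ hx

end InsertClosed

section UnionClosed

variable {S : Finset (Finset α)} {a b : α} {z η : Finset α} {u w : List α}

lemma UnionClosed.image_riseStep (hS : UnionClosed S) (b : α) :
    UnionClosed (S.image (riseStep S b)) := by
  simp only [UnionClosed, forall_mem_image]
  intro f hf g hg
  have hfg := hS f hf g hg
  by_cases hbf : insert b f ∈ S <;> by_cases hbg : insert b g ∈ S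
  · rw [riseStep_of_insert_mem hbf, riseStep_of_insert_mem hbg]
    refine mem_image.2 ⟨f ∪ g, hfg, riseStep_of_insert_mem ?_⟩
    rw [← insert_union]
    exact hS _ hbf g hg
  · rw [riseStep_of_insert_mem hbf, riseStep_of_insert_notMem hbg, union_insert]
    exact insert_mem_image_riseStep hfg
  · rw [riseStep_of_insert_notMem hbf, riseStep_of_insert_mem hbg, insert_union]
    exact insert_mem_image_riseStep hfg
  · rw [riseStep_of_insert_notMem hbf, riseStep_of_insert_notMem hbg, insert_union,
      union_insert, insert_idem]
    exact insert_mem_image_riseStep hfg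

lemma UnionClosed.riseSections (hS : UnionClosed S) (u : List α) :
    UnionClosed (riseSections S u) := by
  induction u generalizing S with
  | nil => exact hS
  | cons b u ih => exact ih (hS.image_riseStep b)

lemma erase_riseStep_self_notMem_upperClosure (hS : UnionClosed S) (hz : z ∈ S)
    (haz : insert a z ∉ S) :
    (riseStep S a z).erase a ∉ upperClosure (S.image (riseStep S a) : Set (Finset α)) := by
  have ha : a ∉ z := fun h => haz (by rwa [insert_eq_of_mem h])
  rw [riseStep_of_insert_notMem haz, erase_insert ha, coe_image, mem_upperClosure]
  rintro ⟨_, ⟨g, hg, rfl⟩, hgz⟩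
  by_cases hag : insert a g ∈ S
  · rw [riseStep_of_insert_mem hag] at hgz
    refine haz ?_
    rw [← union_eq_right.2 hgz, ← insert_union]
    exact hS _ hag z hz
  · rw [riseStep_of_insert_notMem hag] at hgz
    exact ha (hgz (mem_insert_self a g))

lemma erase_riseStep_notMem_upperClosure (hS : UnionClosed S) (hη : η ∈ S) (hba : b ≠ a)
    (h : η.erase a ∉ upperClosure (S : Set (Finset α))) :
    (riseStep S b η).erase a ∉ upperClosure (S.image (riseStep S b) : Set (Finset α)) := by
  rw [mem_upperClosure, not_exists] at h
  rw [coe_image, mem_upperClosure]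
  rintro ⟨_, ⟨g, hg, rfl⟩, hgη⟩
  replace hgη := (subset_riseStep S b g).trans hgη
  by_cases hbη : insert b η ∈ S
  · rw [riseStep_of_insert_mem hbη] at hgη
    exact h g ⟨hg, hgη⟩
  · rw [riseStep_of_insert_notMem hbη, erase_insert_of_ne hba] at hgη
    by_cases hbg : b ∈ g
    · have hunion : g ∪ η = insert b η := by
        refine Subset.antisymm (union_subset ?_ (subset_insert b η)) ?_
        · exact hgη.trans (insert_subset_insert b (erase_subset a η))
        · exact insert_subset (mem_union_left η hbg) subset_union_right
      exact hbη (hunion ▸ hS g hg η hη)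
    · exact h g ⟨hg, (subset_insert_iff_of_notMem hbg).1 hgη⟩

lemma erase_riseWord_notMem_upperClosure (hS : UnionClosed S) (hη : η ∈ S) (hau : a ∉ u)
    (h : η.erase a ∉ upperClosure (S : Set (Finset α))) :
    (riseWord S u η).erase a ∉ upperClosure (riseSections S u : Set (Finset α)) := by
  induction u generalizing S η with
  | nil => exact h
  | cons b u ih =>
    rw [List.mem_cons, not_or] at hau
    exact ih (hS.image_riseStep b) (mem_image_of_mem _ hη) hau.2
      (erase_riseStep_notMem_upperClosure hS hη (Ne.symm hau.1) h)

theorem erase_riseWord_notMem_image (hS : UnionClosed S) (hw : w.Nodup) (hz : z ∈ S)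
    (haz : a ∉ z) (ha : a ∈ riseWord S w z) :
    (riseWord S w z).erase a ∉ S.image (riseWord S w) := by
  have haw : a ∈ w := by_contra fun haw => notMem_riseWord haz haw ha
  obtain ⟨u₁, u₂, rfl⟩ := List.append_of_mem haw
  have hau : a ∉ u₁ ++ u₂ := (List.nodup_cons.1 (List.nodup_middle.1 hw)).1
  rw [List.mem_append, not_or] at hau
  set S₁ := riseSections S u₁
  set z₁ := riseWord S u₁ z
  have hz₁ : z₁ ∈ S₁ := by
    rw [show S₁ = _ from riseSections_eq_image S u₁]
    exact mem_image_of_mem _ hz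
  rw [riseWord_append] at ha ⊢
  rw [← riseSections_eq_image, riseSections_append]
  by_cases haz₁ : insert a z₁ ∈ S₁
  · rw [riseWord, riseStep_of_insert_mem haz₁] at ha
    exact absurd ha (notMem_riseWord (notMem_riseWord haz hau.1) hau.2)
  · have hinit := erase_riseStep_self_notMem_upperClosure (hS.riseSections u₁) hz₁ haz₁
    have hend := erase_riseWord_notMem_upperClosure ((hS.riseSections u₁).image_riseStep a)
      (mem_image_of_mem _ hz₁) hau.2 hinit
    exact fun hmem => hend (subset_upperClosure hmem)

end UnionClosed

section Decomposition

variable (F : Finset (Finset α)) (w : List α) (a : α)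

lemma filter_mem_image_riseWord :
    (F.image (riseWord F w)).filter (fun η => a ∈ η) =
      (F.filter fun f => a ∈ f).image (riseWord F w) ∪ spurious F w a := by
  ext η
  simp only [spurious, mem_union, mem_filter, mem_image]
  constructor
  · rintro ⟨⟨f, hf, rfl⟩, ha⟩
    by_cases haf : a ∈ f
    · exact Or.inl ⟨f, ⟨hf, haf⟩, rfl⟩
    · exact Or.inr ⟨⟨f, ⟨hf, haf⟩, rfl⟩, ha⟩
  · rintro (⟨f, ⟨hf, haf⟩, rfl⟩ | ⟨⟨f, ⟨hf, -⟩, rfl⟩, ha⟩)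
    exacts [⟨⟨f, hf, rfl⟩, subset_riseWord F w f haf⟩, ⟨⟨f, hf, rfl⟩, ha⟩]

lemma disjoint_image_riseWord_spurious :
    Disjoint ((F.filter fun f => a ∈ f).image (riseWord F w)) (spurious F w a) := by
  rw [disjoint_left]
  rintro _ h₁ h₂
  obtain ⟨f, hf, rfl⟩ := mem_image.1 h₁
  obtain ⟨g, hg, hgf⟩ := mem_image.1 (mem_filter.1 h₂).1
  rw [mem_filter] at hf hg
  exact hg.2 (riseWord_injOn F w hg.1 hf.1 hgf ▸ hf.2)

lemma image_riseWord_filter_mem (hF : UnionClosed F) (hw : w.Nodup) (ha : a ∈ w) :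
    (F.filter fun f => a ∈ f).image (riseWord F w) =
      pureF F w a ∪ ((F.image (riseWord F w)).filter (fun η => a ∉ η)).image (insert a) := by
  ext η
  simp only [pureF, mem_union, mem_filter]
  constructor
  · intro hη
    obtain ⟨f, hf, rfl⟩ := mem_image.1 hη
    by_cases hη' : (riseWord F w f).erase a ∈ F.image (riseWord F w)
    · refine Or.inr (mem_image.2 ⟨_, mem_filter.2 ⟨hη', notMem_erase a _⟩, insert_erase ?_⟩)
      exact subset_riseWord F w f (mem_filter.1 hf).2
    · exact Or.inl ⟨hη, hη'⟩
  · rintro (⟨hη, -⟩ | hη)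
    · exact hη
    · obtain ⟨z, hz, rfl⟩ := mem_image.1 hη
      rw [mem_filter] at hz
      obtain ⟨g, hg, hgz⟩ := mem_image.1 (insertClosed_image_riseWord F ha z hz.1)
      refine mem_image.2 ⟨g, mem_filter.2 ⟨hg, by_contra fun hag => ?_⟩, hgz⟩
      have hnot := erase_riseWord_notMem_image hF hw hg hag (hgz ▸ mem_insert_self a z)
      rw [hgz, erase_insert hz.2] at hnot
      exact hnot hz.1

lemma disjoint_pureF_image_insert :
    Disjoint (pureF F w a)
      (((F.image (riseWord F w)).filter (fun η => a ∉ η)).image (insert a)) := by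
  rw [disjoint_left]
  rintro _ h₁ h₂
  obtain ⟨z, hz, rfl⟩ := mem_image.1 h₂
  rw [mem_filter] at hz
  have h₁ := (mem_filter.1 h₁).2
  rw [erase_insert hz.2] at h₁
  exact h₁ hz.1

lemma spurious_union_pureF (hF : UnionClosed F) (hw : w.Nodup) :
    spurious F w a ∪ pureF F w a =
      (F.image (riseWord F w)).filter fun z => z.erase a ∉ F.image (riseWord F w) := by
  ext η
  simp only [spurious, pureF, mem_union, mem_filter]
  constructor
  · rintro (⟨hη, ha⟩ | ⟨hη, hη'⟩)
    · obtain ⟨f, hf, rfl⟩ := mem_image.1 hη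
      rw [mem_filter] at hf
      exact ⟨mem_image_of_mem _ hf.1, erase_riseWord_notMem_image hF hw hf.1 hf.2 ha⟩
    · exact ⟨image_subset_image (filter_subset _ F) hη, hη'⟩
  · rintro ⟨hη, hη'⟩
    obtain ⟨f, hf, rfl⟩ := mem_image.1 hη
    have ha : a ∈ riseWord F w f := by
      by_contra ha
      rw [erase_eq_of_notMem ha] at hη'
      exact hη' hη
    by_cases haf : a ∈ f
    · exact Or.inr ⟨mem_image_of_mem _ (mem_filter.2 ⟨hf, haf⟩), hη'⟩
    · exact Or.inl ⟨mem_image_of_mem _ (mem_filter.2 ⟨hf, haf⟩), ha⟩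

end Decomposition

theorem stmt_13_general {α : Type*} [DecidableEq α]
    (F : Finset (Finset α)) (hF : UnionClosed F)
    (w : List α) (hnd : w.Nodup) (hall : ∀ x : α, x ∈ w)
    (a : α) :
    ((F.image (riseWord F w)).filter (fun η => a ∈ η) =
        (F.filter fun f => a ∈ f).image (riseWord F w) ∪ spurious F w a ∧
      Disjoint ((F.filter fun f => a ∈ f).image (riseWord F w)) (spurious F w a)) ∧
    ((F.filter fun f => a ∈ f).image (riseWord F w) =
        pureF F w a ∪ ((F.image (riseWord F w)).filter (fun η => a ∉ η)).image (insert a) ∧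
      Disjoint (pureF F w a)
        (((F.image (riseWord F w)).filter (fun η => a ∉ η)).image (insert a))) ∧
    (spurious F w a ∪ pureF F w a =
      (F.image (riseWord F w)).filter fun z => z.erase a ∉ F.image (riseWord F w)) ∧
    ((F.image (riseWord F w)).filter (fun η => a ∈ η)).card =
      ((F.image (riseWord F w)).filter (fun η => a ∉ η)).card +
        (pureF F w a).card + (spurious F w a).card := by
  have h₁ := filter_mem_image_riseWord F w a
  have h₁' := disjoint_image_riseWord_spurious F w a
  have h₂ := image_riseWord_filter_mem F w a hF hnd (hall a)
  have h₂' := disjoint_pureF_image_insert F w a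
  have hinsert : (((F.image (riseWord F w)).filter (fun η => a ∉ η)).image (insert a)).card =
      ((F.image (riseWord F w)).filter (fun η => a ∉ η)).card :=
    card_image_of_injOn (insert_erase_invOn.2.injOn.mono fun _ h => (mem_filter.1 h).2)
  refine ⟨⟨h₁, h₁'⟩, ⟨h₂, h₂'⟩, spurious_union_pureF F w a hF hnd, ?_⟩
  rw [h₁, card_union_of_disjoint h₁', h₂, card_union_of_disjoint h₂', hinsert]
  ring

/-- Lemma 5.4: ℱ_a is partitioned by φ_w(𝔉_a) and σ_w(a); in turn φ_w(𝔉_a) is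
partitioned by π_w(a) and ψ(ℱ_ā) where ψ(z) = z ∪ {a}; moreover
σ_w(a) ∪ π_w(a) = { z ∈ ℱ : z \ {a} ∉ ℱ } and
|ℱ_a| = |ℱ_ā| + |π_w(a)| + |σ_w(a)|. -/
theorem stmt_13 {α : Type*} [DecidableEq α] [Fintype α]
    (F : Finset (Finset α)) (hF : UnionClosed F)
    (w : List α) (hnd : w.Nodup) (hall : ∀ x : α, x ∈ w)
    (a : α) :
    ((F.image (riseWord F w)).filter (fun η => a ∈ η) =
        (F.filter fun f => a ∈ f).image (riseWord F w) ∪ spurious F w a ∧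
      Disjoint ((F.filter fun f => a ∈ f).image (riseWord F w)) (spurious F w a)) ∧
    ((F.filter fun f => a ∈ f).image (riseWord F w) =
        pureF F w a ∪ ((F.image (riseWord F w)).filter (fun η => a ∉ η)).image (insert a) ∧
      Disjoint (pureF F w a)
        (((F.image (riseWord F w)).filter (fun η => a ∉ η)).image (insert a))) ∧
    (spurious F w a ∪ pureF F w a =
      (F.image (riseWord F w)).filter fun z => z.erase a ∉ F.image (riseWord F w)) ∧
    ((F.image (riseWord F w)).filter (fun η => a ∈ η)).card =
      ((F.image (riseWord F w)).filter (fun η => a ∉ η)).card +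
        (pureF F w a).card + (spurious F w a).card :=
  stmt_13_general F hF w hnd hall a
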